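/- Let n, p ∈ ℕ with p ≥ n ≥ 1, and index the set I⁺(n,p) = {ξ ∈ ℕ^n : ξ_i ≥ 1, ∑ξ_i ≤ p} as ξ_1, …, ξ_M. The M×M matrix D with entries D_{ij} = ∏_{l=1}^n (ξ_{j,l}²)^{ξ_{i,l}} = ξ_j^{2ξ_i} is nonsingular. -/

import Mathlib

/-- The set I⁺(n,p) of vectors in ℕ^n with strictly positive coordinates and
coordinate sum at most p. -/
def Iplus (n p : ℕ) : Finset (Fin n → ℕ) :=
  ((Finset.range (p + 1)).biUnion (fun m => Finset.Nat.antidiagonalTuple n m)).filter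
    (fun ξ => ∀ i, 1 ≤ ξ i)

/-! A row vector `v` with `v D = 0` is the coefficient vector of a polynomial `P = ∑ v_ξ X^ξ`
vanishing at the points `(η_1², …, η_n²)`, `η ∈ I⁺(n,p)`, and, since all exponents are positive,
also at such points with zero coordinates. These points form the grid over the lower set
`{β : ∑ β_l ≤ p}` of nodes `k ↦ k²`, and the lower set contains the support of `P`. A polynomial
supported on a lower set and vanishing on the corresponding grid of distinct nodes is zero: by
induction on the number of variables, its leading coefficient in `X_0`, of degree `j` say,
vanishes on the grid of the slice at height `j`, because on each line through that slice the
polynomial has degree at most `j` and `j + 1` roots. -/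

open MvPolynomial Matrix

theorem Finsupp.cons_le_cons {M : Type*} [Zero M] [LE M] {n : ℕ} {a b : M}
    {s t : Fin n →₀ M} :
    Finsupp.cons a s ≤ Finsupp.cons b t ↔ a ≤ b ∧ s ≤ t := by
  simp only [Finsupp.le_def, Fin.forall_fin_succ, Finsupp.cons_zero, Finsupp.cons_succ]

theorem MvPolynomial.eq_zero_of_eval_zero_at_lowerSet_grid {R : Type*} [CommRing R] [IsDomain R]
    {n : ℕ} {t : Fin n → ℕ → R} (ht : ∀ i, Function.Injective (t i))
    {S : Set (Fin n →₀ ℕ)} (hS : IsLowerSet S) {P : MvPolynomial (Fin n) R}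
    (hsupp : ↑P.support ⊆ S) (hP : ∀ β ∈ S, eval (fun i => t i (β i)) P = 0) : P = 0 := by
  induction n with
  | zero =>
    rw [P.eq_C_of_isEmpty] at hP ⊢
    by_contra hP0
    have h0 : (0 : Fin 0 →₀ ℕ) ∈ P.support := by rwa [mem_support_iff, ← C_ne_zero]
    exact hP0 (by simpa using hP 0 (hsupp h0))
  | succ n ih =>
    set Q := finSuccEquiv R n P
    suffices Q.leadingCoeff = 0 by simpa [Q] using this
    set j := Q.natDegree
    have hslice : IsLowerSet {m : Fin n →₀ ℕ | m.cons j ∈ S} := fun m m' hle hm =>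
      hS (Finsupp.cons_le_cons.mpr ⟨le_rfl, hle⟩) hm
    refine ih (t := fun i => t i.succ) (fun i => ht i.succ) hslice (fun m hm => ?_) (fun η hη => ?_)
    · exact hsupp (mem_support_coeff_finSuccEquiv.mp hm)
    · have hline : Q.map (eval fun i => t i.succ (η i)) = 0 := by
        refine Polynomial.eq_zero_of_natDegree_lt_card_of_eval_eq_zero _
          (f := fun i : Fin (j + 1) => t 0 i) ((ht 0).comp Fin.val_injective) (fun i => ?_) ?_
        · rw [← eval_eq_eval_mv_eval']
          convert hP (η.cons i) (hS (Finsupp.cons_le_cons.mpr ⟨i.is_le, le_rfl⟩) hη) using 2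
          congr 1
          funext k
          cases k using Fin.cases <;> simp
        · simpa using (Polynomial.natDegree_map_le).trans_lt j.lt_succ_self
      have hcoeff := congrArg (Polynomial.coeff · j) hline
      simp only [Polynomial.coeff_map, Polynomial.coeff_zero] at hcoeff
      exact hcoeff

section PolynomialOfCoeffs

variable {R : Type*} [CommRing R] {n : ℕ} {s : Finset (Fin n → ℕ)}

noncomputable def polynomialOfCoeffs (v : s → R) : MvPolynomial (Fin n) R :=
  ∑ ξ : s, monomial (Finsupp.equivFunOnFinite.symm ξ) (v ξ)

theorem coeff_polynomialOfCoeffs (v : s → R) (ξ : s) :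
    coeff (Finsupp.equivFunOnFinite.symm ξ) (polynomialOfCoeffs v) = v ξ := by
  classical
  rw [polynomialOfCoeffs, coeff_sum, Finset.sum_eq_single ξ]
  · rw [coeff_monomial, if_pos rfl]
  · intro η _ hη
    rw [coeff_monomial, if_neg]
    exact fun h => hη (Subtype.ext (Finsupp.equivFunOnFinite.symm.injective h))
  · simp

theorem support_polynomialOfCoeffs_subset (v : s → R) :
    ↑(polynomialOfCoeffs v).support ⊆ {β : Fin n →₀ ℕ | ⇑β ∈ s} := by
  classical
  intro β hβ
  obtain ⟨ξ, -, hξ⟩ := Finset.mem_biUnion.mp (support_sum (Finset.mem_coe.mp hβ))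
  rw [Finset.mem_singleton.mp (support_monomial_subset hξ)]
  exact ξ.2

theorem eval_polynomialOfCoeffs (v : s → R) (x : Fin n → R) :
    eval x (polynomialOfCoeffs v) = ∑ ξ, v ξ * ∏ l, x l ^ (ξ : Fin n → ℕ) l := by
  simp only [polynomialOfCoeffs, map_sum, eval_monomial]
  refine Finset.sum_congr rfl fun ξ _ => ?_
  rw [Finsupp.prod_fintype _ _ (fun _ => pow_zero _)]
  rfl

end PolynomialOfCoeffs

theorem mem_Iplus {n p : ℕ} {ξ : Fin n → ℕ} :
    ξ ∈ Iplus n p ↔ ∑ i, ξ i ≤ p ∧ ∀ i, 1 ≤ ξ i := by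
  simp only [Iplus, Finset.mem_filter, Finset.mem_biUnion, Finset.mem_range,
    Finset.Nat.mem_antidiagonalTuple, Nat.lt_succ_iff, exists_eq_right']

theorem isLowerSet_setOf_sum_le (n p : ℕ) : IsLowerSet {β : Fin n →₀ ℕ | ∑ i, β i ≤ p} :=
  fun _ _ hle hβ => (Finset.sum_le_sum fun i _ => hle i).trans hβ

theorem natCast_sq_injective : Function.Injective fun k : ℕ => (k : ℚ) ^ 2 := fun a b h =>
  Nat.pow_left_injective two_ne_zero (by simpa only [← Nat.cast_pow, Nat.cast_inj] using h)

def matrixD (n p : ℕ) : Matrix (Iplus n p) (Iplus n p) ℚ :=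
  fun ξ η => ∏ l, ((η : Fin n → ℕ) l : ℚ) ^ (2 * (ξ : Fin n → ℕ) l)

theorem eval_sq_polynomialOfCoeffs_eq_zero_of_vecMul_eq_zero {n p : ℕ} {v : Iplus n p → ℚ}
    (hv : v ᵥ* matrixD n p = 0) {β : Fin n →₀ ℕ} (hβ : ∑ i, β i ≤ p) :
    eval (fun l => (β l : ℚ) ^ 2) (polynomialOfCoeffs v) = 0 := by
  rw [eval_polynomialOfCoeffs]
  by_cases hpos : ∀ l, 1 ≤ β l
  · have := congrFun hv ⟨β, mem_Iplus.mpr ⟨hβ, hpos⟩⟩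
    simpa only [vecMul, dotProduct, matrixD, pow_mul, Pi.zero_apply] using this
  · push Not at hpos
    obtain ⟨l, hl⟩ := hpos
    refine Finset.sum_eq_zero fun ξ _ =>
      mul_eq_zero_of_right _ (Finset.prod_eq_zero (Finset.mem_univ l) ?_)
    rw [Nat.lt_one_iff.mp hl, Nat.cast_zero, zero_pow two_ne_zero,
      zero_pow (Nat.one_le_iff_ne_zero.mp ((mem_Iplus.mp ξ.2).2 l))]

theorem D_nonsingular_general (n p : ℕ) :
    Matrix.det (fun ξ η : ↥(Iplus n p) =>
      ∏ l, ((η : Fin n → ℕ) l : ℚ) ^ (2 * (ξ : Fin n → ℕ) l)) ≠ 0 := by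
  change (matrixD n p).det ≠ 0
  rw [Ne, ← exists_vecMul_eq_zero_iff]
  rintro ⟨v, hv0, hv⟩
  have hP : polynomialOfCoeffs v = 0 :=
    eq_zero_of_eval_zero_at_lowerSet_grid (fun _ => natCast_sq_injective)
      (isLowerSet_setOf_sum_le n p)
      ((support_polynomialOfCoeffs_subset v).trans fun β hβ => (mem_Iplus.mp hβ).1)
      fun β hβ => eval_sq_polynomialOfCoeffs_eq_zero_of_vecMul_eq_zero hv hβ
  exact hv0 (funext fun ξ => by rw [← coeff_polynomialOfCoeffs v ξ, hP, coeff_zero, Pi.zero_apply])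

/-- The matrix D generated by I⁺(n,p), with entries D_{ξη} = η^{2ξ} = ∏_l η_l^{2ξ_l},
is nonsingular. -/
theorem D_nonsingular (n p : ℕ) (hn : 1 ≤ n) (hp : n ≤ p) :
    Matrix.det (fun ξ η : ↥(Iplus n p) =>
      ∏ l, ((η : Fin n → ℕ) l : ℚ) ^ (2 * (ξ : Fin n → ℕ) l)) ≠ 0 :=
  D_nonsingular_general n p
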